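/- arXiv:1503.05968 — 4 statements merged into one kernel-verified Lean document; each statement's English description precedes it below -/
import Mathlib

section
/- Let A be a stable n×n real matrix and L a symmetric positive semidefinite n×n real matrix. Then the integral R = ∫₀^∞ exp(A t) L exp(Aᵀ t) dt converges, R is symmetric positive semidefinite, R is the unique n×n matrix satisfying the Lyapunov equation A R + R Aᵀ + L = 0, and if L is positive definite then R is positive definite. -/
/-!
Stability makes `exp (t • A)` decay exponentially. Every eigenvalue of `exp A` is `exp μ` for an
eigenvalue `μ` of `A` (take a common eigenvector of the commuting maps `A` and `exp A`), so the
spectral radius of `exp A` is `< 1`, Gelfand's formula makes some power `exp (k • A)` a strict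
contraction, and the semigroup law spreads this contraction over all `t ≥ 0`.

Hence `F_P t = exp (t • A) * P * exp (t • Aᵀ)` is integrable on `(0, ∞)` and tends to `0`. As
`F_P' = A F_P + F_P Aᵀ = F_{A P + P Aᵀ}`, the fundamental theorem of calculus gives
`∫₀^∞ F_{A P + P Aᵀ} = -P` for every `P`. For `P = L`, after moving the Lyapunov operator inside the
integral, this says that `R = ∫₀^∞ F_L` solves the equation; for `P = R'` a solution, it says
`R' = ∫₀^∞ F_L`. Positivity passes from `L` to each congruence `F_L t` and then to the integral.
-/

open Matrix MeasureTheory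

def IsStable {n : ℕ} (A : Matrix (Fin n) (Fin n) ℝ) : Prop :=
  ∀ μ ∈ spectrum ℂ (A.map Complex.ofReal), μ.re < 0

open Filter Topology NormedSpace Set

theorem exists_norm_pow_lt_one_of_forall_norm_lt_one {𝔸 : Type*} [NormedRing 𝔸]
    [NormedAlgebra ℂ 𝔸] [CompleteSpace 𝔸] {a : 𝔸} (h : ∀ z ∈ spectrum ℂ a, ‖z‖ < 1) :
    ∃ k : ℕ, 0 < k ∧ ‖a ^ k‖ < 1 := by
  rcases subsingleton_or_nontrivial 𝔸 with h𝔸 | h𝔸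
  · exact ⟨1, one_pos, by simp [Subsingleton.elim (a ^ 1) 0]⟩
  have hρ : spectralRadius ℂ a < 1 := by
    simpa using spectrum.spectralRadius_lt_of_forall_lt a (r := 1) fun z hz => by
      exact_mod_cast h z hz
  obtain ⟨k, hk, hk0⟩ := ((spectrum.pow_norm_pow_one_div_tendsto_nhds_spectralRadius a
    |>.eventually_lt_const hρ).and (eventually_gt_atTop 0)).exists
  refine ⟨k, hk0, ?_⟩
  rwa [ENNReal.ofReal_lt_one, Real.rpow_lt_one_iff' (norm_nonneg _) (by positivity)] at hk

section RealBanachAlgebra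

variable {𝔸 : Type*} [NormedRing 𝔸] [NormedAlgebra ℝ 𝔸] [CompleteSpace 𝔸]

theorem norm_exp_smul_nat_mul_add_le (a : 𝔸) (τ s : ℝ) (m : ℕ) :
    ‖exp ((m * τ + s) • a)‖ ≤ ‖exp (τ • a)‖ ^ m * ‖exp (s • a)‖ := by
  let +nondep : NormedAlgebra ℚ 𝔸 := .restrictScalars ℚ ℝ 𝔸
  induction m with
  | zero => simp
  | succ m ih =>
    have hsplit : (↑(m + 1) * τ + s) • a = τ • a + (m * τ + s) • a := by
      rw [← add_smul]; push_cast; ring_nf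
    rw [hsplit, NormedSpace.exp_add_of_commute ((Commute.refl a).smul_left τ |>.smul_right _),
      pow_succ', mul_assoc]
    exact (norm_mul_le _ _).trans (by gcongr)

theorem exists_norm_exp_smul_le_of_norm_exp_smul_lt_one {a : 𝔸} {τ : ℝ} (hτ : 0 < τ)
    (h : ‖exp (τ • a)‖ < 1) :
    ∃ C ε : ℝ, 0 < ε ∧ ∀ t, 0 ≤ t → ‖exp (t • a)‖ ≤ C * Real.exp (-ε * t) := by
  let +nondep : NormedAlgebra ℚ 𝔸 := .restrictScalars ℚ ℝ 𝔸
  -- the floor `1 / 2` keeps `q` positive, so that `Real.log q` is meaningful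
  set q := max ‖exp (τ • a)‖ (1 / 2)
  have hq0 : 0 < q := lt_max_of_lt_right (by norm_num)
  have hlogq : Real.log q < 0 := Real.log_neg hq0 (max_lt h (by norm_num))
  have hcont : Continuous fun s : ℝ => exp (s • a) :=
    exp_continuous.comp (continuous_id.smul continuous_const)
  obtain ⟨C₀, hC₀⟩ := (isCompact_Icc (a := 0) (b := τ)).exists_bound_of_continuousOn
    hcont.continuousOn
  have hC₀0 : 0 ≤ C₀ := (norm_nonneg _).trans (hC₀ 0 ⟨le_rfl, hτ.le⟩)
  refine ⟨C₀ / q, -Real.log q / τ, div_pos (neg_pos.2 hlogq) hτ, fun t ht => ?_⟩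
  set m := ⌊t / τ⌋₊
  have hm : t / τ - 1 ≤ m := by linarith [Nat.lt_floor_add_one (t / τ)]
  have hs : t - m * τ ∈ Icc 0 τ := by
    constructor
    · linarith [(le_div_iff₀ hτ).1 (Nat.floor_le (by positivity : 0 ≤ t / τ))]
    · nlinarith [(div_lt_iff₀ hτ).1 (Nat.lt_floor_add_one (t / τ))]
  have hqm : q ^ m ≤ Real.exp (-(-Real.log q / τ) * t) / q := by
    rw [← Real.exp_log hq0, ← Real.exp_nat_mul, ← Real.exp_sub, Real.log_exp]
    refine Real.exp_le_exp.2 ?_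
    have : -(-Real.log q / τ) * t - Real.log q = Real.log q * (t / τ - 1) := by
      field_simp
    rw [this, mul_comm]
    exact mul_le_mul_of_nonpos_left hm hlogq.le
  calc ‖exp (t • a)‖ = ‖exp ((m * τ + (t - m * τ)) • a)‖ := by ring_nf
    _ ≤ ‖exp (τ • a)‖ ^ m * ‖exp ((t - m * τ) • a)‖ := norm_exp_smul_nat_mul_add_le a τ _ m
    _ ≤ q ^ m * C₀ := by gcongr; exacts [le_max_left _ _, hC₀ _ hs]
    _ ≤ Real.exp (-(-Real.log q / τ) * t) / q * C₀ := by gcongr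
    _ = C₀ / q * Real.exp (-(-Real.log q / τ) * t) := by ring

end RealBanachAlgebra

theorem integrableOn_Ioi_of_norm_le_exp_neg {E : Type*} [NormedAddCommGroup E] {f : ℝ → E}
    (hf : Continuous f) {C ε : ℝ} (hε : 0 < ε)
    (hle : ∀ t, 0 ≤ t → ‖f t‖ ≤ C * Real.exp (-ε * t)) :
    IntegrableOn f (Ioi 0) :=
  ((exp_neg_integrableOn_Ioi 0 hε).const_mul C).mono' hf.aestronglyMeasurable.restrict
    ((ae_restrict_iff' measurableSet_Ioi).2 (.of_forall fun t ht => hle t (le_of_lt ht)))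

theorem tendsto_zero_of_norm_le_exp_neg {E : Type*} [NormedAddCommGroup E] {f : ℝ → E}
    {C ε : ℝ} (hε : 0 < ε) (hle : ∀ t, 0 ≤ t → ‖f t‖ ≤ C * Real.exp (-ε * t)) :
    Tendsto f atTop (𝓝 0) := by
  refine squeeze_zero_norm' ((eventually_ge_atTop 0).mono hle) ?_
  simpa using ((Real.tendsto_exp_atBot.comp
    (tendsto_id.const_mul_atTop_of_neg (neg_neg_iff_pos.2 hε))).const_mul C)

theorem Module.End.exists_hasEigenvector_of_commute {K V : Type*} [Field K] [IsAlgClosed K]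
    [AddCommGroup V] [Module K V] [FiniteDimensional K V] {f g : Module.End K V}
    (hfg : Commute f g) {c : K} (hc : g.HasEigenvalue c) :
    ∃ μ v, f.HasEigenvector μ v ∧ g.HasEigenvector c v := by
  have hE : MapsTo f (g.eigenspace c) (g.eigenspace c) := mapsTo_genEigenspace_of_comm hfg.symm c 1
  have : Nontrivial (g.eigenspace c) := Submodule.nontrivial_iff_ne_bot.2 hc
  obtain ⟨μ, hμ⟩ := exists_eigenvalue (f.restrict hE)
  obtain ⟨w, hw⟩ := hμ.exists_hasEigenvector
  refine ⟨μ, w, ⟨?_, by simpa using hw.2⟩, ⟨w.2, by simpa using hw.2⟩⟩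
  exact mem_eigenspace_iff.2 (congrArg Subtype.val (mem_eigenspace_iff.1 hw.1))

theorem Matrix.linearMap_apply_eq_sum {m n : Type*} [Fintype m] [Fintype n] [DecidableEq m]
    [DecidableEq n] (φ : Matrix m n ℝ →ₗ[ℝ] ℝ) (M : Matrix m n ℝ) :
    φ M = ∑ i, ∑ j, M i j * φ (single i j 1) := by
  conv_lhs => rw [matrix_eq_sum_single M]
  simp only [map_sum]
  refine Finset.sum_congr rfl fun i _ => Finset.sum_congr rfl fun j _ => ?_
  rw [← smul_eq_mul, ← map_smul, smul_single, smul_eq_mul, mul_one]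

def Matrix.quadraticEval {n : Type*} [Fintype n] (x : n → ℝ) : Matrix n n ℝ →ₗ[ℝ] ℝ where
  toFun M := x ⬝ᵥ M *ᵥ x
  map_add' M N := by simp [add_mulVec, dotProduct_add]
  map_smul' c M := by simp [smul_mulVec, dotProduct_smul]

theorem Matrix.quadraticEval_apply {n : Type*} [Fintype n] (x : n → ℝ) (M : Matrix n n ℝ) :
    quadraticEval x M = x ⬝ᵥ M *ᵥ x := rfl

variable {ι : Type*} [Fintype ι]

def lyapunovOp (A : Matrix ι ι ℝ) : Matrix ι ι ℝ →ₗ[ℝ] Matrix ι ι ℝ :=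
  LinearMap.mulLeft ℝ A + LinearMap.mulRight ℝ Aᵀ

theorem lyapunovOp_apply (A P : Matrix ι ι ℝ) : lyapunovOp A P = A * P + P * Aᵀ := rfl

variable [DecidableEq ι]

noncomputable def lyapunovFlow (A P : Matrix ι ι ℝ) (t : ℝ) : Matrix ι ι ℝ :=
  exp (t • A) * P * exp (t • Aᵀ)

/-- Matrices carry no global norm, so the integral is taken entrywise. -/
noncomputable def lyapunovIntegral (A P : Matrix ι ι ℝ) : Matrix ι ι ℝ :=
  Matrix.of fun i j => ∫ t in Ioi 0, lyapunovFlow A P t i j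

theorem lyapunovFlow_zero (A P : Matrix ι ι ℝ) : lyapunovFlow A P 0 = P := by
  simp [lyapunovFlow]

theorem lyapunovFlow_neg (A P : Matrix ι ι ℝ) (t : ℝ) :
    lyapunovFlow A (-P) t = -lyapunovFlow A P t := by
  simp [lyapunovFlow]

theorem lyapunovOp_lyapunovFlow (A P : Matrix ι ι ℝ) (t : ℝ) :
    lyapunovOp A (lyapunovFlow A P t) = lyapunovFlow A (lyapunovOp A P) t := by
  have hA : A * exp (t • A) = exp (t • A) * A :=
    (Commute.exp_right ((Commute.refl A).smul_right t)).eq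
  have hAt : exp (t • Aᵀ) * Aᵀ = Aᵀ * exp (t • Aᵀ) :=
    (Commute.exp_left ((Commute.refl Aᵀ).smul_left t)).eq
  simp only [lyapunovOp_apply, lyapunovFlow, mul_add, add_mul, ← mul_assoc, hA]
  simp only [mul_assoc, hAt]

theorem exp_smul_transpose (A : Matrix ι ι ℝ) (t : ℝ) : exp (t • Aᵀ) = (exp (t • A))ᴴ := by
  rw [conjTranspose_eq_transpose_of_trivial, ← transpose_smul, exp_transpose]

theorem Matrix.PosSemidef.lyapunovFlow {P : Matrix ι ι ℝ} (hP : P.PosSemidef)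
    (A : Matrix ι ι ℝ) (t : ℝ) : (lyapunovFlow A P t).PosSemidef := by
  rw [_root_.lyapunovFlow, exp_smul_transpose]
  exact hP.mul_mul_conjTranspose_same _

theorem Matrix.PosDef.lyapunovFlow {P : Matrix ι ι ℝ} (hP : P.PosDef)
    (A : Matrix ι ι ℝ) (t : ℝ) : (lyapunovFlow A P t).PosDef := by
  rw [_root_.lyapunovFlow, exp_smul_transpose]
  exact hP.mul_mul_conjTranspose_same (vecMul_injective_iff_isUnit.2 (isUnit_exp _))

section FrobeniusNorm

-- The Frobenius norm is submultiplicative and invariant under `ᵀ` and under `ℝ ↪ ℂ`.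
attribute [local instance] Matrix.frobeniusNormedAddCommGroup Matrix.frobeniusNormedRing
  Matrix.frobeniusNormedAlgebra

theorem Matrix.norm_apply_le_frobenius_norm {m n α : Type*} [Fintype m] [Fintype n]
    [NormedAddCommGroup α] (M : Matrix m n α) (i : m) (j : n) : ‖M i j‖ ≤ ‖M‖ :=
  calc ‖M i j‖ ≤ ‖WithLp.toLp 2 (M i)‖ := PiLp.norm_apply_le (WithLp.toLp 2 (M i)) j
    _ ≤ ‖WithLp.toLp 2 fun i => WithLp.toLp 2 (M i)‖ :=
      PiLp.norm_apply_le (WithLp.toLp 2 fun i => WithLp.toLp 2 (M i)) i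

theorem Matrix.exp_mulVec_of_mulVec_eq_smul {M : Matrix ι ι ℂ} {μ : ℂ} {v : ι → ℂ}
    (h : M *ᵥ v = μ • v) : exp M *ᵥ v = Complex.exp μ • v := by
  have hpow : ∀ k : ℕ, M ^ k *ᵥ v = μ ^ k • v := by
    intro k
    induction k with
    | zero => simp
    | succ k ih =>
      rw [pow_succ', ← mulVec_mulVec, ih, mulVec_smul, h, smul_smul, pow_succ, mul_comm]
  have hM := (exp_series_hasSum_exp' (𝕂 := ℂ) M).map (mulVec.addMonoidHomLeft v)
    (continuous_id.matrix_mulVec continuous_const)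
  have hμ := (exp_series_hasSum_exp' (𝕂 := ℂ) μ).smul_const v
  rw [Complex.exp_eq_exp_ℂ]
  refine hM.unique (hμ.congr_fun fun k => ?_)
  change ((k.factorial : ℂ)⁻¹ • M ^ k) *ᵥ v = _
  rw [smul_mulVec, hpow, smul_smul, smul_eq_mul]

theorem Matrix.spectrum_exp_subset (M : Matrix ι ι ℂ) :
    spectrum ℂ (exp M) ⊆ Complex.exp '' spectrum ℂ M := by
  intro c hc
  rw [← spectrum_toLin', ← Module.End.hasEigenvalue_iff_mem_spectrum] at hc
  obtain ⟨μ, v, hμ, hc⟩ := Module.End.exists_hasEigenvector_of_commute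
    ((Commute.exp_right (Commute.refl M)).map toLinAlgEquiv') hc
  refine ⟨μ, ?_, ?_⟩
  · rw [← spectrum_toLin', ← Module.End.hasEigenvalue_iff_mem_spectrum]
    exact Module.End.hasEigenvalue_of_hasEigenvector hμ
  · have hexp : exp M *ᵥ v = Complex.exp μ • v := exp_mulVec_of_mulVec_eq_smul hμ.apply_eq_smul
    have hc' : exp M *ᵥ v = c • v := hc.apply_eq_smul
    exact smul_left_injective ℂ hc.2 (hexp.symm.trans hc')

theorem Matrix.map_ofReal_exp (M : Matrix ι ι ℝ) :
    (exp M).map Complex.ofReal = exp (M.map Complex.ofReal) :=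
  map_exp Complex.ofRealHom.mapMatrix (continuous_id.matrix_map Complex.continuous_ofReal) M

theorem hasDerivAt_map_lyapunovFlow (A P : Matrix ι ι ℝ) (φ : Matrix ι ι ℝ →ₗ[ℝ] ℝ) (t : ℝ) :
    HasDerivAt (fun s => φ (lyapunovFlow A P s)) (φ (lyapunovOp A (lyapunovFlow A P t))) t := by
  have h := ((hasDerivAt_exp_smul_const' A t).mul_const P).mul (hasDerivAt_exp_smul_const Aᵀ t)
  refine ((LinearMap.toContinuousLinearMap φ).hasFDerivAt.comp_hasDerivAt t h).congr_deriv ?_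
  simp only [lyapunovOp_apply, lyapunovFlow, mul_assoc]
  rfl

theorem continuous_lyapunovFlow (A P : Matrix ι ι ℝ) : Continuous (lyapunovFlow A P) :=
  ((exp_continuous.comp (continuous_id.smul continuous_const)).mul continuous_const).mul
    (exp_continuous.comp (continuous_id.smul continuous_const))

variable {n : ℕ} {A : Matrix (Fin n) (Fin n) ℝ}

theorem IsStable.exists_norm_exp_smul_le (hA : IsStable A) :
    ∃ C ε : ℝ, 0 < ε ∧ ∀ t, 0 ≤ t → ‖exp (t • A)‖ ≤ C * Real.exp (-ε * t) := by
  have hσ : ∀ z ∈ spectrum ℂ (exp (A.map Complex.ofReal)), ‖z‖ < 1 := by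
    intro z hz
    obtain ⟨μ, hμ, rfl⟩ := spectrum_exp_subset _ hz
    rw [Complex.norm_exp, Real.exp_lt_one_iff]
    exact hA μ hμ
  obtain ⟨k, hk, hnorm⟩ := exists_norm_pow_lt_one_of_forall_norm_lt_one hσ
  refine exists_norm_exp_smul_le_of_norm_exp_smul_lt_one (τ := k) (by positivity) ?_
  have hmap : (exp ((k : ℝ) • A)).map Complex.ofReal = exp (A.map Complex.ofReal) ^ k := by
    rw [Nat.cast_smul_eq_nsmul, Matrix.exp_nsmul, ← map_ofReal_exp]
    exact map_pow Complex.ofRealHom.mapMatrix _ k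
  calc ‖exp ((k : ℝ) • A)‖ = ‖(exp ((k : ℝ) • A)).map Complex.ofReal‖ :=
        (frobenius_norm_map_eq _ _ Complex.norm_real).symm
    _ < 1 := hmap ▸ hnorm

theorem IsStable.exists_norm_lyapunovFlow_le (hA : IsStable A) (P : Matrix (Fin n) (Fin n) ℝ) :
    ∃ C ε : ℝ, 0 < ε ∧ ∀ t, 0 ≤ t → ‖lyapunovFlow A P t‖ ≤ C * Real.exp (-ε * t) := by
  obtain ⟨C, ε, hε, hle⟩ := hA.exists_norm_exp_smul_le
  refine ⟨C * ‖P‖ * C, ε + ε, by positivity, fun t ht => ?_⟩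
  have hexp := hle t ht
  have hC : 0 ≤ C * Real.exp (-ε * t) := (norm_nonneg _).trans hexp
  have hexpT : ‖exp (t • Aᵀ)‖ = ‖exp (t • A)‖ := by
    rw [← transpose_smul, exp_transpose, frobenius_norm_transpose]
  calc ‖lyapunovFlow A P t‖ ≤ ‖exp (t • A) * P‖ * ‖exp (t • Aᵀ)‖ := norm_mul_le _ _
    _ ≤ ‖exp (t • A)‖ * ‖P‖ * ‖exp (t • A)‖ := by
        rw [hexpT]; gcongr; exact norm_mul_le _ _
    _ ≤ C * Real.exp (-ε * t) * ‖P‖ * (C * Real.exp (-ε * t)) := by gcongr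
    _ = C * ‖P‖ * C * Real.exp (-(ε + ε) * t) := by
        rw [show -(ε + ε) * t = -ε * t + -ε * t by ring, Real.exp_add]; ring

theorem IsStable.integrableOn_lyapunovFlow_apply (hA : IsStable A)
    (P : Matrix (Fin n) (Fin n) ℝ) (i j : Fin n) :
    IntegrableOn (fun t => lyapunovFlow A P t i j) (Ioi 0) := by
  obtain ⟨C, ε, hε, hle⟩ := hA.exists_norm_lyapunovFlow_le P
  exact integrableOn_Ioi_of_norm_le_exp_neg ((continuous_lyapunovFlow A P).matrix_elem i j) hε
    fun t ht => (norm_apply_le_frobenius_norm _ i j).trans (hle t ht)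

theorem IsStable.tendsto_lyapunovFlow_atTop (hA : IsStable A) (P : Matrix (Fin n) (Fin n) ℝ) :
    Tendsto (lyapunovFlow A P) atTop (𝓝 0) := by
  obtain ⟨C, ε, hε, hle⟩ := hA.exists_norm_lyapunovFlow_le P
  exact tendsto_zero_of_norm_le_exp_neg hε hle

end FrobeniusNorm

section Stable

variable {n : ℕ} {A : Matrix (Fin n) (Fin n) ℝ}

theorem IsStable.integrableOn_lyapunovFlow (hA : IsStable A) (P : Matrix (Fin n) (Fin n) ℝ)
    (φ : Matrix (Fin n) (Fin n) ℝ →ₗ[ℝ] ℝ) :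
    IntegrableOn (fun t => φ (lyapunovFlow A P t)) (Ioi 0) := by
  rw [funext fun t => linearMap_apply_eq_sum φ (lyapunovFlow A P t)]
  exact integrable_finsetSum _ fun i _ => integrable_finsetSum _ fun j _ =>
    (hA.integrableOn_lyapunovFlow_apply P i j).mul_const _

theorem IsStable.map_lyapunovIntegral (hA : IsStable A) (P : Matrix (Fin n) (Fin n) ℝ)
    (φ : Matrix (Fin n) (Fin n) ℝ →ₗ[ℝ] ℝ) :
    φ (lyapunovIntegral A P) = ∫ t in Ioi 0, φ (lyapunovFlow A P t) := by
  have hint i j := (hA.integrableOn_lyapunovFlow_apply P i j).mul_const (φ (single i j 1))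
  rw [funext fun t => linearMap_apply_eq_sum φ (lyapunovFlow A P t), linearMap_apply_eq_sum φ,
    integral_finsetSum _ fun i _ => integrable_finsetSum _ fun j _ => hint i j]
  refine Finset.sum_congr rfl fun i _ => ?_
  rw [integral_finsetSum _ fun j _ => hint i j]
  refine Finset.sum_congr rfl fun j _ => ?_
  rw [integral_mul_const]
  rfl

theorem IsStable.integral_lyapunovFlow_lyapunovOp (hA : IsStable A)
    (P : Matrix (Fin n) (Fin n) ℝ) (φ : Matrix (Fin n) (Fin n) ℝ →ₗ[ℝ] ℝ) :
    ∫ t in Ioi 0, φ (lyapunovFlow A (lyapunovOp A P) t) = -φ P := by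
  have hderiv : ∀ t, HasDerivAt (fun s => φ (lyapunovFlow A P s))
      (φ (lyapunovFlow A (lyapunovOp A P) t)) t := fun t => by
    rw [← lyapunovOp_lyapunovFlow]
    exact hasDerivAt_map_lyapunovFlow A P φ t
  have hlim : Tendsto (fun s => φ (lyapunovFlow A P s)) atTop (𝓝 0) := by
    have := ((LinearMap.continuous_of_finiteDimensional φ).tendsto 0).comp
      (hA.tendsto_lyapunovFlow_atTop P)
    rwa [map_zero] at this
  rw [integral_Ioi_of_hasDerivAt_of_tendsto (hderiv 0).continuousAt.continuousWithinAt
    (fun t _ => hderiv t) (hA.integrableOn_lyapunovFlow _ φ) hlim, lyapunovFlow_zero, zero_sub]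

theorem IsStable.lyapunovOp_lyapunovIntegral (hA : IsStable A) (P : Matrix (Fin n) (Fin n) ℝ) :
    lyapunovOp A (lyapunovIntegral A P) = -P := by
  ext i j
  calc lyapunovOp A (lyapunovIntegral A P) i j
      = ∫ t in Ioi 0, lyapunovOp A (lyapunovFlow A P t) i j :=
        hA.map_lyapunovIntegral P (entryLinearMap ℝ ℝ i j ∘ₗ lyapunovOp A)
    _ = -P i j := by
        simp_rw [lyapunovOp_lyapunovFlow]
        exact hA.integral_lyapunovFlow_lyapunovOp P (entryLinearMap ℝ ℝ i j)

theorem IsStable.eq_lyapunovIntegral_of_lyapunovOp_eq_neg (hA : IsStable A)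
    {P X : Matrix (Fin n) (Fin n) ℝ} (h : lyapunovOp A X = -P) : X = lyapunovIntegral A P := by
  ext i j
  have hX := hA.integral_lyapunovFlow_lyapunovOp X (entryLinearMap ℝ ℝ i j)
  simp only [h, lyapunovFlow_neg, entryLinearMap_apply, Matrix.neg_apply, integral_neg,
    neg_inj] at hX
  exact hX.symm

theorem IsStable.posSemidef_lyapunovIntegral (hA : IsStable A) {P : Matrix (Fin n) (Fin n) ℝ}
    (hP : P.PosSemidef) : (lyapunovIntegral A P).PosSemidef := by
  refine .of_dotProduct_mulVec_nonneg ?_ fun x => ?_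
  · ext i j
    simpa [lyapunovIntegral] using integral_congr_ae (μ := volume.restrict (Ioi (0 : ℝ)))
      (.of_forall fun t => (hP.lyapunovFlow A t).isHermitian.apply i j)
  · rw [star_trivial]
    refine (hA.map_lyapunovIntegral P (quadraticEval x)).trans_ge (integral_nonneg fun t => ?_)
    simpa [quadraticEval_apply] using (hP.lyapunovFlow A t).dotProduct_mulVec_nonneg x

theorem IsStable.posDef_lyapunovIntegral (hA : IsStable A) {P : Matrix (Fin n) (Fin n) ℝ}
    (hP : P.PosDef) : (lyapunovIntegral A P).PosDef := by
  refine .of_dotProduct_mulVec_pos (hA.posSemidef_lyapunovIntegral hP.posSemidef).1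
    fun x hx => ?_
  have hpos : ∀ t, 0 < x ⬝ᵥ lyapunovFlow A P t *ᵥ x := fun t => by
    simpa using (hP.lyapunovFlow A t).dotProduct_mulVec_pos hx
  rw [star_trivial]
  refine (hA.map_lyapunovIntegral P (quadraticEval x)).trans_gt ?_
  simp only [quadraticEval_apply]
  rw [setIntegral_pos_iff_support_of_nonneg_ae (.of_forall fun t => (hpos t).le)
    (hA.integrableOn_lyapunovFlow P (quadraticEval x)),
    Function.support_eq_univ fun t => (hpos t).ne']
  simp

end Stable

theorem stmt1_general {n : ℕ} (A L : Matrix (Fin n) (Fin n) ℝ)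
    (hA : IsStable A) (hL : L.PosSemidef)
    (R : Matrix (Fin n) (Fin n) ℝ)
    (hR : ∀ i j, R i j =
      ∫ t in Set.Ioi (0 : ℝ),
        (NormedSpace.exp (t • A) * L * NormedSpace.exp (t • Aᵀ)) i j) :
    (∀ i j, IntegrableOn
        (fun t : ℝ => (NormedSpace.exp (t • A) * L * NormedSpace.exp (t • Aᵀ)) i j)
        (Set.Ioi (0 : ℝ))) ∧
    R.IsSymm ∧ R.PosSemidef ∧
    A * R + R * Aᵀ + L = 0 ∧
    (∀ R' : Matrix (Fin n) (Fin n) ℝ, A * R' + R' * Aᵀ + L = 0 → R' = R) ∧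
    (L.PosDef → R.PosDef) := by
  obtain rfl : R = lyapunovIntegral A L := Matrix.ext hR
  have hpsd := hA.posSemidef_lyapunovIntegral hL
  refine ⟨hA.integrableOn_lyapunovFlow_apply L, ?_, hpsd, ?_, fun R' hR' => ?_,
    hA.posDef_lyapunovIntegral⟩
  · show _ᵀ = _
    simpa [IsHermitian, conjTranspose_eq_transpose_of_trivial] using hpsd.isHermitian
  · rw [← lyapunovOp_apply, hA.lyapunovOp_lyapunovIntegral, neg_add_cancel]
  · exact hA.eq_lyapunovIntegral_of_lyapunovOp_eq_neg (eq_neg_of_add_eq_zero_left hR')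

/-- For `A` stable and `L` symmetric positive semidefinite, the integral
`R = ∫₀^∞ exp(A t) L exp(Aᵀ t) dt` converges (entrywise), `R` is symmetric positive
semidefinite, `R` is the unique solution of the Lyapunov equation `A R + R Aᵀ + L = 0`,
and if `L` is positive definite then so is `R`. -/
theorem stmt1 {n : ℕ} (A L : Matrix (Fin n) (Fin n) ℝ)
    (hA : IsStable A) (hLsymm : L.IsSymm) (hL : L.PosSemidef)
    (R : Matrix (Fin n) (Fin n) ℝ)
    (hR : ∀ i j, R i j =
      ∫ t in Set.Ioi (0 : ℝ),
        (NormedSpace.exp (t • A) * L * NormedSpace.exp (t • Aᵀ)) i j) :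
    (∀ i j, IntegrableOn
        (fun t : ℝ => (NormedSpace.exp (t • A) * L * NormedSpace.exp (t • Aᵀ)) i j)
        (Set.Ioi (0 : ℝ))) ∧
    R.IsSymm ∧ R.PosSemidef ∧
    A * R + R * Aᵀ + L = 0 ∧
    (∀ R' : Matrix (Fin n) (Fin n) ℝ, A * R' + R' * Aᵀ + L = 0 → R' = R) ∧
    (L.PosDef → R.PosDef) :=
  stmt1_general A L hA hL R hR
end

section
/- Let D be a diagonal n×n real matrix with pairwise distinct diagonal entries, let M ⊆ {1,…,n} with |M| = p, let M̄ be its complement, and let E = Σ_{i∈M} Σ_{ii}. Then the linear map Ω ↦ [D, [E, Ω]] is injective on the linear span of { Ω_{ij} : i ∈ M, j ∈ M̄ }; that is, if Ω lies in this span and [D, [E, Ω]] = 0 then Ω = 0. -/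
/-!
Commutators with a diagonal matrix act entrywise: `[diag d, X]ᵢⱼ = (dᵢ - dⱼ) Xᵢⱼ`.
With `E = diag e`, `e` the indicator of `M`, this gives `[D, [E, Ω]]ᵢⱼ = (dᵢ - dⱼ)(eᵢ - eⱼ) Ωᵢⱼ`.
The factor is nonzero exactly when `i` and `j` lie on different sides of `M`, and every `Ω` in the
span of the `Ω_{ij}` vanishes on the two diagonal blocks `M × M` and `Mᶜ × Mᶜ`.
-/

open Matrix

/-- `Om i j` is the skew-symmetric matrix `Ω_{ij}` with `(i,j)` entry `1`,
`(j,i)` entry `-1` and zeros elsewhere. -/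
def Om {n : ℕ} (i j : Fin n) : Matrix (Fin n) (Fin n) ℝ :=
  Matrix.single i j 1 - Matrix.single j i 1

namespace Matrix

variable {n R : Type*} [DecidableEq n]

theorem diagonal_mul_sub_mul_diagonal_apply [Fintype n] [CommRing R] (d : n → R)
    (A : Matrix n n R) (i j : n) :
    (diagonal d * A - A * diagonal d) i j = (d i - d j) * A i j := by
  simp only [sub_apply, diagonal_mul, mul_diagonal]
  ring

theorem sum_single_one_eq_diagonal [AddCommMonoidWithOne R] (M : Finset n) :
    ∑ i ∈ M, single i i (1 : R) = diagonal fun i => if i ∈ M then 1 else 0 := by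
  simp_rw [← diagonal_single, ← diagonalAddMonoidHom_apply, ← map_sum]
  congr 1
  ext j
  simp [Finset.sum_apply]

variable (R) in
def offBlockDiagonal [Semiring R] (M : Finset n) : Submodule R (Matrix n n R) where
  carrier := {X | ∀ i j, (i ∈ M ↔ j ∈ M) → X i j = 0}
  add_mem' hX hY i j hij := by simp [hX i j hij, hY i j hij]
  zero_mem' _ _ _ := rfl
  smul_mem' c X hX i j hij := by simp [hX i j hij]

theorem single_sub_single_mem_offBlockDiagonal [Ring R] {M : Finset n} {i j : n}
    (hi : i ∈ M) (hj : j ∉ M) (r : R) :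
    single i j r - single j i r ∈ offBlockDiagonal R M := by
  intro a b hab
  have : ¬(i = a ∧ j = b) ∧ ¬(j = a ∧ i = b) := by grind
  simp [single_apply_of_ne (h := this.1), single_apply_of_ne (h := this.2)]

end Matrix

/-- Let `D` be diagonal with pairwise distinct diagonal entries, `M` a subset of the
index set and `E = ∑_{i ∈ M} Σ_{ii}`. Then `Ω ↦ [D, [E, Ω]]` is injective on the span
of `{ Ω_{ij} : i ∈ M, j ∉ M }`. -/
theorem stmt10 {n : ℕ} (d : Fin n → ℝ) (hd : Function.Injective d)
    (M : Finset (Fin n))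
    (D E : Matrix (Fin n) (Fin n) ℝ)
    (hD : D = Matrix.diagonal d)
    (hE : E = ∑ i ∈ M, Matrix.single i i (1 : ℝ))
    (Ω : Matrix (Fin n) (Fin n) ℝ)
    (hΩ : Ω ∈ Submodule.span ℝ
      {X : Matrix (Fin n) (Fin n) ℝ | ∃ i ∈ M, ∃ j ∉ M, X = Om i j})
    (hzero : D * (E * Ω - Ω * E) - (E * Ω - Ω * E) * D = 0) :
    Ω = 0 := by
  have hsupp : Ω ∈ offBlockDiagonal ℝ M := by
    refine Submodule.span_le.mpr ?_ hΩ
    rintro _ ⟨i, hi, j, hj, rfl⟩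
    exact single_sub_single_mem_offBlockDiagonal hi hj 1
  ext i j
  rw [Matrix.zero_apply]
  by_cases hij : i ∈ M ↔ j ∈ M
  · exact hsupp i j hij
  have hentry := congr($hzero i j)
  rw [hD, hE, sum_single_one_eq_diagonal, diagonal_mul_sub_mul_diagonal_apply,
    diagonal_mul_sub_mul_diagonal_apply, Matrix.zero_apply] at hentry
  have hd_ne : d i - d j ≠ 0 := sub_ne_zero.mpr (hd.ne fun h => hij (h ▸ Iff.rfl))
  have he_ne : (if i ∈ M then (1 : ℝ) else 0) - (if j ∈ M then 1 else 0) ≠ 0 := by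
    split_ifs <;> simp_all
  simpa [hd_ne, he_ne] using hentry
end

section
/- Let D be a diagonal n×n real matrix with strictly increasing diagonal entries, let M ⊆ {1,…,n} with |M| = p (1 ≤ p ≤ n−1), let E = Σ_{i∈M} Σ_{ii}, and consider the symmetric bilinear form H_E(Ω, Ω′) = tr([E, Ω] [D, Ω′]) on the space spanned by { Ω_{ij} : i ∈ M, j ∉ M }. Then H_E is negative definite if and only if M = {1, 2, …, p}, and H_E is positive definite if and only if M = {n−p+1, …, n}; in particular there is exactly one choice of M for which H_E is negative definite and exactly one for which it is positive definite. -/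
/-!
For skew-symmetric `Ω` and diagonal `E = diag e`, `D = diag d`,
`tr([E, Ω] [D, Ω]) = ∑_{i,j} (e_i - e_j) (d_i - d_j) Ω_{ij}²`. On the span of the `Ω_{ij}` with
`i ∈ M`, `j ∉ M` only entries in `M × Mᶜ` and `Mᶜ × M` survive, so `H_E` is negative definite iff
`d_i < d_j` for all `i ∈ M`, `j ∉ M` (necessity: the form takes the value `2 (d_i - d_j)` at
`Ω_{ij}`). As `d` is increasing, this says that `M` lies below its complement, i.e.
`M = {1, …, p}`. Positive definiteness is negative definiteness for `-d`, and passing to the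
complement turns it into `M` lying above its complement.
-/

open Matrix Finset

lemma sum_mul_sq_pos {ι κ : Type*} [Fintype ι] [Fintype κ] {c x : ι → κ → ℝ}
    (hc : ∀ i j, x i j ≠ 0 → 0 < c i j) (hx : x ≠ 0) :
    0 < ∑ i, ∑ j, c i j * x i j ^ 2 := by
  obtain ⟨a, b, hab⟩ : ∃ a b, x a b ≠ 0 := by
    by_contra! h
    exact hx (funext₂ h)
  have hterm : ∀ i j, 0 ≤ c i j * x i j ^ 2 := by
    intro i j
    by_cases hij : x i j = 0
    · simp [hij]
    · exact (mul_pos (hc i j hij) (by positivity)).le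
  exact sum_pos' (fun i _ => sum_nonneg fun j _ => hterm i j)
    ⟨a, mem_univ a, sum_pos' (fun j _ => hterm a j)
      ⟨b, mem_univ b, mul_pos (hc a b hab) (by positivity)⟩⟩

def crossSpace {ι : Type*} (M : Finset ι) : Submodule ℝ (Matrix ι ι ℝ) where
  carrier := {Ω | Ωᵀ = -Ω ∧ ∀ i j, (i ∈ M ↔ j ∈ M) → Ω i j = 0}
  add_mem' := by
    rintro A B ⟨hA, hA'⟩ ⟨hB, hB'⟩
    refine ⟨by rw [transpose_add, hA, hB, neg_add], fun i j h => ?_⟩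
    rw [Matrix.add_apply, hA' i j h, hB' i j h, add_zero]
  zero_mem' := ⟨by simp, fun _ _ _ => rfl⟩
  smul_mem' := by
    rintro c A ⟨hA, hA'⟩
    refine ⟨by rw [transpose_smul, hA, smul_neg], fun i j h => ?_⟩
    rw [Matrix.smul_apply, hA' i j h, smul_zero]

section Commutator

variable {ι : Type*} [Fintype ι] [DecidableEq ι]

lemma commutator_diagonal_apply (e : ι → ℝ) (Ω : Matrix ι ι ℝ) (i j : ι) :
    (diagonal e * Ω - Ω * diagonal e) i j = (e i - e j) * Ω i j := by
  simp only [Matrix.sub_apply, diagonal_mul, mul_diagonal]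
  ring

lemma trace_commutator_diagonal_mul_of_transpose_eq_neg (e d : ι → ℝ) {Ω : Matrix ι ι ℝ}
    (hΩ : Ωᵀ = -Ω) :
    trace ((diagonal e * Ω - Ω * diagonal e) * (diagonal d * Ω - Ω * diagonal d)) =
      ∑ i, ∑ j, (e i - e j) * (d i - d j) * Ω i j ^ 2 := by
  have hskew : ∀ i j, Ω j i = -Ω i j := fun i j => congrFun (congrFun hΩ i) j
  simp only [trace, diag_apply, mul_apply, commutator_diagonal_apply]
  refine sum_congr rfl fun i _ => sum_congr rfl fun j _ => ?_
  rw [hskew i j]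
  ring

lemma sum_mem_single_eq_diagonal (M : Finset ι) :
    ∑ i ∈ M, single i i (1 : ℝ) = diagonal fun i => if i ∈ M then 1 else 0 := by
  rw [← sum_single_eq_diagonal]
  simp only [apply_ite (single _ _), single_zero, Finset.sum_ite_mem, univ_inter]

/-- The quadratic form `Ω ↦ H_E(Ω, Ω)` with `E = ∑_{i ∈ M} Σ_{ii}` and `D = diag d`. -/
def commForm (M : Finset ι) (d : ι → ℝ) (Ω : Matrix ι ι ℝ) : ℝ :=
  let E := diagonal fun i => if i ∈ M then (1 : ℝ) else 0
  trace ((E * Ω - Ω * E) * (diagonal d * Ω - Ω * diagonal d))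

lemma commForm_neg (M : Finset ι) (d : ι → ℝ) (Ω : Matrix ι ι ℝ) :
    commForm M (-d) Ω = -commForm M d Ω := by
  rw [commForm, commForm, ← trace_neg,
    show diagonal (-d) = -diagonal d from (diagonal_neg d).symm]
  congr 1
  noncomm_ring

lemma commForm_neg_of_mem_crossSpace {M : Finset ι} {d : ι → ℝ}
    (hd : ∀ i ∈ M, ∀ j ∉ M, d i < d j) {Ω : Matrix ι ι ℝ}
    (hΩ : Ω ∈ crossSpace M) (hne : Ω ≠ 0) : commForm M d Ω < 0 := by
  obtain ⟨hskew, hsupp⟩ := hΩ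
  have hcoeff : ∀ i j, Ω i j ≠ 0 →
      0 < -(((if i ∈ M then 1 else 0) - (if j ∈ M then 1 else 0)) * (d i - d j)) := by
    intro i j hij
    by_cases hi : i ∈ M <;> by_cases hj : j ∈ M
    · exact absurd (hsupp i j (iff_of_true hi hj)) hij
    · simp [hi, hj, hd i hi j hj]
    · simp [hi, hj, hd j hj i hi]
    · exact absurd (hsupp i j (iff_of_false hi hj)) hij
  have := sum_mul_sq_pos hcoeff hne
  rw [commForm, trace_commutator_diagonal_mul_of_transpose_eq_neg _ _ hskew]
  simpa only [neg_mul, sum_neg_distrib, neg_pos] using this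

end Commutator

section Om

variable {n : ℕ}

lemma Om_transpose (i j : Fin n) : (Om i j)ᵀ = -Om i j := by
  simp [Om, transpose_single]

lemma Om_ne_zero {i j : Fin n} (h : i ≠ j) : Om i j ≠ 0 := by
  intro h0
  have := congrFun (congrFun h0 i) j
  simp [Om, h] at this

lemma sum_mul_Om_sq (c : Fin n → Fin n → ℝ) {i j : Fin n} (h : i ≠ j) :
    ∑ a, ∑ b, c a b * Om i j a b ^ 2 = c i j + c j i := by
  have hsq : ∀ a b, Om i j a b ^ 2 = single i j 1 a b + single j i 1 a b := by
    intro a b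
    simp only [Om, Matrix.sub_apply, single_apply]
    split_ifs <;> simp_all
  simp [hsq, mul_add, Finset.sum_add_distrib, single_apply, ite_and]

def crossSpan (M : Finset (Fin n)) : Submodule ℝ (Matrix (Fin n) (Fin n) ℝ) :=
  Submodule.span ℝ {X | ∃ i ∈ M, ∃ j ∉ M, X = Om i j}

lemma crossSpan_le_crossSpace (M : Finset (Fin n)) : crossSpan M ≤ crossSpace M := by
  rw [crossSpan, Submodule.span_le]
  rintro _ ⟨i, hi, j, hj, rfl⟩
  refine ⟨Om_transpose i j, fun a b hab => ?_⟩
  simp only [Om, Matrix.sub_apply, single_apply]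
  split_ifs <;> simp_all

lemma commForm_Om {M : Finset (Fin n)} (d : Fin n → ℝ) {i j : Fin n} (hi : i ∈ M) (hj : j ∉ M) :
    commForm M d (Om i j) = 2 * (d i - d j) := by
  rw [commForm, trace_commutator_diagonal_mul_of_transpose_eq_neg _ _ (Om_transpose i j),
    sum_mul_Om_sq _ (ne_of_mem_of_not_mem hi hj)]
  simp [hi, hj]
  ring

theorem commForm_negDef_iff (M : Finset (Fin n)) (d : Fin n → ℝ) :
    (∀ Ω ∈ crossSpan M, Ω ≠ 0 → commForm M d Ω < 0) ↔ ∀ i ∈ M, ∀ j ∉ M, d i < d j := by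
  refine ⟨fun h i hi j hj => ?_, fun h Ω hΩ hne =>
    commForm_neg_of_mem_crossSpace h (crossSpan_le_crossSpace M hΩ) hne⟩
  have := h _ (Submodule.subset_span ⟨i, hi, j, hj, rfl⟩) (Om_ne_zero (ne_of_mem_of_not_mem hi hj))
  rw [commForm_Om d hi hj] at this
  linarith

theorem commForm_posDef_iff (M : Finset (Fin n)) (d : Fin n → ℝ) :
    (∀ Ω ∈ crossSpan M, Ω ≠ 0 → 0 < commForm M d Ω) ↔ ∀ i ∈ M, ∀ j ∉ M, d j < d i := by
  simpa only [commForm_neg, neg_lt_zero, Pi.neg_apply, neg_lt_neg_iff] using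
    commForm_negDef_iff M (-d)

end Om

section Segments

variable {n : ℕ}

lemma forall_lt_iff_eq_filter {M : Finset (Fin n)} {p : ℕ} (hM : M.card = p) :
    (∀ i ∈ M, ∀ j ∉ M, i < j) ↔ M = univ.filter fun i : Fin n => (i : ℕ) < p := by
  constructor
  · intro h
    ext i
    simp only [mem_filter, mem_univ, true_and]
    constructor
    · intro hi
      have hle := card_le_card fun j (hj : j ∈ Iic i) =>
        (by_contra fun hjM => not_lt.2 (mem_Iic.1 hj) (h i hi j hjM) : j ∈ M)
      rw [Fin.card_Iic] at hle
      omega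
    · intro hlt
      by_contra hi
      have hle := card_le_card fun j (hj : j ∈ M) => mem_Iio.2 (h j hj i hi)
      rw [Fin.card_Iio] at hle
      omega
  · rintro rfl i hi j hj
    simp only [mem_filter, mem_univ, true_and, not_lt] at hi hj
    exact Fin.lt_def.2 (by omega)

lemma forall_gt_iff_eq_filter {M : Finset (Fin n)} {p : ℕ} (hM : M.card = p) :
    (∀ i ∈ M, ∀ j ∉ M, j < i) ↔ M = univ.filter fun i : Fin n => n - p ≤ (i : ℕ) := by
  have hcompl := forall_lt_iff_eq_filter (M := Mᶜ) (p := n - p)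
    (by rw [card_compl, Fintype.card_fin, hM])
  simp only [mem_compl, not_not] at hcompl
  rw [show (∀ i ∈ M, ∀ j ∉ M, j < i) ↔ ∀ j ∉ M, ∀ i ∈ M, j < i from
    ⟨fun h j hj i hi => h i hi j hj, fun h i hi j hj => h j hj i hi⟩, hcompl, compl_eq_comm,
    compl_filter]
  simp only [not_lt]
  exact eq_comm

end Segments

theorem stmt14_general {n p : ℕ}
    (d : Fin n → ℝ) (hd : StrictMono d) :
    ∀ M : Finset (Fin n), M.card = p →
      ∀ (E : Matrix (Fin n) (Fin n) ℝ),
        E = ∑ i ∈ M, Matrix.single i i (1 : ℝ) →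
      ∀ (H : Matrix (Fin n) (Fin n) ℝ → Matrix (Fin n) (Fin n) ℝ → ℝ),
        (∀ Ω Ω', H Ω Ω' = Matrix.trace
          ((E * Ω - Ω * E) * (Matrix.diagonal d * Ω' - Ω' * Matrix.diagonal d))) →
      ∀ (V : Submodule ℝ (Matrix (Fin n) (Fin n) ℝ)),
        V = Submodule.span ℝ
          {X : Matrix (Fin n) (Fin n) ℝ | ∃ i ∈ M, ∃ j ∉ M, X = Om i j} →
      ((∀ Ω ∈ V, Ω ≠ 0 → H Ω Ω < 0) ↔
          M = Finset.univ.filter (fun i : Fin n => (i : ℕ) < p)) ∧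
      ((∀ Ω ∈ V, Ω ≠ 0 → 0 < H Ω Ω) ↔
          M = Finset.univ.filter (fun i : Fin n => n - p ≤ (i : ℕ))) := by
  intro M hM E hE H hH V hV
  have hHM : ∀ Ω, H Ω Ω = commForm M d Ω := fun Ω => by
    rw [hH, hE, sum_mem_single_eq_diagonal, commForm]
  obtain rfl : V = crossSpan M := hV
  simp only [hHM, commForm_negDef_iff, commForm_posDef_iff, hd.lt_iff_lt]
  exact ⟨forall_lt_iff_eq_filter hM, forall_gt_iff_eq_filter hM⟩

/-- Let `D` be diagonal with strictly increasing diagonal entries and, for a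
`p`-element subset `M`, let `E_M = ∑_{i∈M} Σ_{ii}` and
`H(Ω,Ω') = tr([E_M,Ω][D,Ω'])` on the span of `{Ω_{ij} : i ∈ M, j ∉ M}`. Then `H` is
negative definite iff `M = {1,…,p}` (the lowest `p` indices) and positive definite iff
`M = {n−p+1,…,n}` (the highest `p` indices); in particular exactly one `M` gives a
negative definite form and exactly one a positive definite form. -/
theorem stmt14 {n p : ℕ} (hp1 : 1 ≤ p) (hpn : p ≤ n - 1)
    (d : Fin n → ℝ) (hd : StrictMono d) :
    ∀ M : Finset (Fin n), M.card = p →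
      ∀ (E : Matrix (Fin n) (Fin n) ℝ),
        E = ∑ i ∈ M, Matrix.single i i (1 : ℝ) →
      ∀ (H : Matrix (Fin n) (Fin n) ℝ → Matrix (Fin n) (Fin n) ℝ → ℝ),
        (∀ Ω Ω', H Ω Ω' = Matrix.trace
          ((E * Ω - Ω * E) * (Matrix.diagonal d * Ω' - Ω' * Matrix.diagonal d))) →
      ∀ (V : Submodule ℝ (Matrix (Fin n) (Fin n) ℝ)),
        V = Submodule.span ℝ
          {X : Matrix (Fin n) (Fin n) ℝ | ∃ i ∈ M, ∃ j ∉ M, X = Om i j} →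
      ((∀ Ω ∈ V, Ω ≠ 0 → H Ω Ω < 0) ↔
          M = Finset.univ.filter (fun i : Fin n => (i : ℕ) < p)) ∧
      ((∀ Ω ∈ V, Ω ≠ 0 → 0 < H Ω Ω) ↔
          M = Finset.univ.filter (fun i : Fin n => n - p ≤ (i : ℕ))) :=
  stmt14_general d hd
end

section
/- Let A be a stable n×n real matrix, Q and L symmetric positive definite n×n matrices, and C a symmetric positive semidefinite n×n matrix. Let K₀ and R₀ be the unique solutions of Aᵀ K₀ + K₀ A + Q = 0 and A R₀ + R₀ Aᵀ + L = 0 respectively. Suppose K : [0, ε) → (n×n real matrices) is differentiable at 0 and satisfies Aᵀ K(γ) + K(γ) A − γ K(γ) C K(γ) + Q = 0 for every γ ∈ [0, ε). Then K(0) = K₀, the derivative K′(0) satisfies Aᵀ K′(0) + K′(0) A = K₀ C K₀, and the derivative of the cost γ ↦ tr(L K(γ)) at γ = 0 equals −tr(K₀ R₀ K₀ · C). -/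
/-!
Stability of `A` makes the Lyapunov operator `X ↦ Aᵀ X + X A` injective (Sylvester: the spectra
of `Aᵀ` and `-A` are disjoint), so `K 0 = K₀`. Differentiating the Riccati identity at `γ = 0`
gives `Aᵀ K' + K' A = K₀ C K₀`. The derivative of the cost is `tr (L K')`; substituting
`L = -(A R₀ + R₀ Aᵀ)` and moving `A` across the trace turns it into
`-tr (R₀ (Aᵀ K' + K' A)) = -tr (R₀ K₀ C K₀)`.
-/

open Matrix

open Polynomial

namespace Matrix

variable {m ι : Type*} [Fintype m] [DecidableEq m] [Fintype ι] [DecidableEq ι]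

theorem aeval_mul_eq_mul_aeval {R : Type*} [CommRing R] {B : Matrix m m R} {C : Matrix ι ι R}
    {X : Matrix m ι R} (h : B * X = X * C) (p : R[X]) : aeval B p * X = X * aeval C p := by
  induction p using Polynomial.induction_on with
  | C a => simp [Algebra.algebraMap_eq_smul_one]
  | add p q hp hq => rw [map_add, map_add, Matrix.add_mul, Matrix.mul_add, hp, hq]
  | monomial k a ih =>
    rw [pow_succ, ← mul_assoc, map_mul, aeval_X, map_mul (aeval C), aeval_X, Matrix.mul_assoc, h,
      ← Matrix.mul_assoc, ih, Matrix.mul_assoc]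

/-- Sylvester: `χ_B(B) X = X χ_B(C)` with `χ_B(B) = 0`, while `χ_B(C)` is invertible because its
spectrum `χ_B(σ C)` avoids `0`. -/
theorem eq_zero_of_mul_eq_mul_of_disjoint_spectrum {K : Type*} [Field K] [IsAlgClosed K]
    {B : Matrix m m K} {C : Matrix ι ι K} {X : Matrix m ι K}
    (hBC : Disjoint (spectrum K B) (spectrum K C)) (h : B * X = X * C) : X = 0 := by
  cases isEmpty_or_nonempty m
  · exact Subsingleton.elim _ _
  have hunit : IsUnit (aeval C B.charpoly) := by
    rw [← spectrum.zero_notMem_iff K, spectrum.map_polynomial_aeval_of_degree_pos _ _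
      (by rw [charpoly_degree_eq_dim]; exact_mod_cast Fintype.card_pos)]
    rintro ⟨μ, hμC, hμB⟩
    exact hBC.notMem_of_mem_right hμC (mem_spectrum_iff_isRoot_charpoly.2 hμB)
  rw [← mul_nonsing_inv_cancel_right _ X ((isUnit_iff_isUnit_det _).1 hunit),
    ← aeval_mul_eq_mul_aeval h, aeval_self_charpoly, Matrix.zero_mul, Matrix.zero_mul]

theorem trace_lyapunov_adjoint {R : Type*} [CommRing R] (A S X : Matrix ι ι R) :
    trace ((A * S + S * Aᵀ) * X) = trace (S * (Aᵀ * X + X * A)) := by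
  rw [add_mul, mul_add, trace_add, trace_add, mul_assoc, trace_mul_comm, mul_assoc,
    mul_assoc, add_comm]

end Matrix

theorem IsStable.lyapunov_injective {n : ℕ} {A : Matrix (Fin n) (Fin n) ℝ} (hA : IsStable A) :
    Function.Injective fun X => Aᵀ * X + X * A := by
  intro X Y hXY
  let φ := Complex.ofRealHom.mapMatrix (m := Fin n)
  have hreal : Aᵀ * (X - Y) = (X - Y) * -A := by
    have : Aᵀ * (X - Y) = (Aᵀ * X + X * A) - (Aᵀ * Y + Y * A) + (X - Y) * -A := by noncomm_ring
    rwa [show Aᵀ * X + X * A = Aᵀ * Y + Y * A from hXY, sub_self, zero_add] at this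
  have hsylv : φ Aᵀ * φ (X - Y) = φ (X - Y) * φ (-A) := by
    rw [← map_mul, ← map_mul, hreal]
  have hdisj : Disjoint (spectrum ℂ (φ Aᵀ)) (spectrum ℂ (φ (-A))) := by
    rw [Set.disjoint_left, map_neg, ← spectrum.neg_eq]
    intro μ hμ hμ'
    rw [mem_spectrum_iff_isRoot_charpoly, RingHom.mapMatrix_apply, transpose_map,
      charpoly_transpose, ← mem_spectrum_iff_isRoot_charpoly] at hμ
    have hre := hA _ hμ
    have hre_neg := hA _ (Set.mem_neg.1 hμ')
    rw [Complex.neg_re] at hre_neg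
    linarith
  have hφ : φ (X - Y) = 0 := eq_zero_of_mul_eq_mul_of_disjoint_spectrum hdisj hsylv
  exact sub_eq_zero.1 ((map_eq_zero_iff φ (map_injective Complex.ofReal_injective)).1 hφ)

section MatrixDeriv

variable {ι : Type*} [Fintype ι] {F : ℝ → Matrix ι ι ℝ} {F' : Matrix ι ι ℝ} {s : Set ℝ} {x : ℝ}

open scoped Matrix.Norms.Elementwise in
theorem Matrix.hasDerivWithinAt_iff_entrywise :
    HasDerivWithinAt F F' s x ↔ ∀ i j, HasDerivWithinAt (fun y => F y i j) (F' i j) s x := by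
  refine hasDerivWithinAt_iff_tendsto_slope.trans ?_
  simp_rw [hasDerivWithinAt_iff_tendsto_slope]
  exact tendsto_pi_nhds.trans (forall_congr' fun i => tendsto_pi_nhds)

theorem HasDerivWithinAt.matrix_trace (hF : HasDerivWithinAt F F' s x) :
    HasDerivWithinAt (fun y => (F y).trace) F'.trace s x :=
  HasDerivWithinAt.fun_sum fun i _ => Matrix.hasDerivWithinAt_iff_entrywise.1 hF i i

/- The operator norm only supplies a normed-algebra structure for the product rule; the
statements themselves see just the product topology. -/
open scoped Matrix.Norms.Operator in
theorem HasDerivWithinAt.matrix_const_mul [DecidableEq ι] (M : Matrix ι ι ℝ)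
    (hF : HasDerivWithinAt F F' s x) : HasDerivWithinAt (fun y => M * F y) (M * F') s x :=
  hF.const_mul M

open scoped Matrix.Norms.Operator in
theorem lyapunov_deriv_of_riccati [DecidableEq ι] {A C Q : Matrix ι ι ℝ} {K : ℝ → Matrix ι ι ℝ}
    {K' : Matrix ι ι ℝ} {ε : ℝ} (hε : 0 < ε) (hK : HasDerivWithinAt K K' (Set.Ici 0) 0)
    (hRic : ∀ γ ∈ Set.Ico (0 : ℝ) ε, Aᵀ * K γ + K γ * A - γ • (K γ * C * K γ) + Q = 0) :
    Aᵀ * K' + K' * A = K 0 * C * K 0 := by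
  have hres : HasDerivWithinAt (fun γ => Aᵀ * K γ + K γ * A - γ • (K γ * C * K γ) + Q)
      (Aᵀ * K' + K' * A - K 0 * C * K 0) (Set.Ici 0) 0 := by
    refine ((((hK.const_mul Aᵀ).fun_add (hK.mul_const A)).fun_sub
      ((hasDerivWithinAt_id 0 _).fun_smul ((hK.mul_const C).fun_mul hK))).add_const Q).congr_deriv ?_
    simp
  have hzero : HasDerivWithinAt (fun γ => Aᵀ * K γ + K γ * A - γ • (K γ * C * K γ) + Q) 0
      (Set.Ici 0) 0 :=
    (hasDerivWithinAt_const _ _ 0).congr_of_eventuallyEq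
      (Filter.eventuallyEq_of_mem (Ico_mem_nhdsGE hε) hRic) (hRic 0 ⟨le_rfl, hε⟩)
  exact sub_eq_zero.1 <| (uniqueDiffWithinAt_Ici 0).eq_deriv _ hres hzero

end MatrixDeriv

theorem stmt17_general {n : ℕ} (A Q L C K₀ R₀ : Matrix (Fin n) (Fin n) ℝ)
    (hA : IsStable A)
    (hK₀ : Aᵀ * K₀ + K₀ * A + Q = 0)
    (hR₀ : A * R₀ + R₀ * Aᵀ + L = 0)
    (ε : ℝ) (hε : 0 < ε)
    (K : ℝ → Matrix (Fin n) (Fin n) ℝ) (K' : Matrix (Fin n) (Fin n) ℝ)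
    (hK : ∀ i j, HasDerivWithinAt (fun γ => K γ i j) (K' i j) (Set.Ici 0) 0)
    (hRic : ∀ γ ∈ Set.Ico (0 : ℝ) ε,
      Aᵀ * K γ + K γ * A - γ • (K γ * C * K γ) + Q = 0) :
    K 0 = K₀ ∧
    Aᵀ * K' + K' * A = K₀ * C * K₀ ∧
    HasDerivWithinAt (fun γ => Matrix.trace (L * K γ))
      (-Matrix.trace (K₀ * R₀ * K₀ * C)) (Set.Ici 0) 0 := by
  have hK0 : K 0 = K₀ := hA.lyapunov_injective <| by
    have h0 := hRic 0 ⟨le_rfl, hε⟩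
    rw [zero_smul, sub_zero] at h0
    exact (eq_neg_of_add_eq_zero_left h0).trans (eq_neg_of_add_eq_zero_left hK₀).symm
  have hKd : HasDerivWithinAt K K' (Set.Ici 0) 0 := Matrix.hasDerivWithinAt_iff_entrywise.2 hK
  have hK' : Aᵀ * K' + K' * A = K₀ * C * K₀ := hK0 ▸ lyapunov_deriv_of_riccati hε hKd hRic
  refine ⟨hK0, hK', (hKd.matrix_const_mul L).matrix_trace.congr_deriv ?_⟩
  calc trace (L * K') = -trace (R₀ * (Aᵀ * K' + K' * A)) := by
        rw [eq_neg_of_add_eq_zero_right hR₀, neg_mul, trace_neg, trace_lyapunov_adjoint]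
    _ = -trace (K₀ * R₀ * K₀ * C) := by
        rw [hK', ← Matrix.mul_assoc, ← Matrix.mul_assoc, trace_mul_comm]
        simp only [Matrix.mul_assoc]

/-- Let `K₀`, `R₀` solve `Aᵀ K₀ + K₀ A + Q = 0` and `A R₀ + R₀ Aᵀ + L = 0`, and let
`K(γ)` solve the Riccati equation `Aᵀ K(γ) + K(γ) A − γ K(γ) C K(γ) + Q = 0` on
`[0, ε)`, differentiable at `0`. Then `K(0) = K₀`, the derivative satisfies
`Aᵀ K′(0) + K′(0) A = K₀ C K₀`, and `(d/dγ) tr(L K(γ))|₀ = −tr(K₀ R₀ K₀ C)`. -/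
theorem stmt17 {n : ℕ} (A Q L C K₀ R₀ : Matrix (Fin n) (Fin n) ℝ)
    (hA : IsStable A) (hQsymm : Q.IsSymm) (hQ : Q.PosDef)
    (hLsymm : L.IsSymm) (hL : L.PosDef) (hCsymm : C.IsSymm) (hC : C.PosSemidef)
    (hK₀ : Aᵀ * K₀ + K₀ * A + Q = 0)
    (hR₀ : A * R₀ + R₀ * Aᵀ + L = 0)
    (ε : ℝ) (hε : 0 < ε)
    (K : ℝ → Matrix (Fin n) (Fin n) ℝ) (K' : Matrix (Fin n) (Fin n) ℝ)
    (hK : ∀ i j, HasDerivWithinAt (fun γ => K γ i j) (K' i j) (Set.Ici 0) 0)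
    (hRic : ∀ γ ∈ Set.Ico (0 : ℝ) ε,
      Aᵀ * K γ + K γ * A - γ • (K γ * C * K γ) + Q = 0) :
    K 0 = K₀ ∧
    Aᵀ * K' + K' * A = K₀ * C * K₀ ∧
    HasDerivWithinAt (fun γ => Matrix.trace (L * K γ))
      (-Matrix.trace (K₀ * R₀ * K₀ * C)) (Set.Ici 0) 0 :=
  stmt17_general A Q L C K₀ R₀ hA hK₀ hR₀ ε hε K K' hK hRic
end
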